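/- Let d₁, d₂ : ℝ² → ℝ³ and θ : ℝ² → ℝ be differentiable, and assume that at every point d₁·d₁ = 1, d₂·d₂ = 1 and d₁·d₂ = 0. Define the rotated directors d₁^θ = (cos θ) d₁ + (sin θ) d₂ and d₂^θ = −(sin θ) d₁ + (cos θ) d₂. Then for every point x ∈ ℝ² and every direction h ∈ ℝ², the directional derivatives satisfy (D_h d₁^θ)(x) · d₂^θ(x) = (D_h d₁)(x) · d₂(x) + (D_h θ)(x). (Key computation in the proof of the representation theorem: superposing a drilling rotation of angle θ shifts the drilling component of the bending–curvature tensor by Grad θ.) -/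

import Mathlib

/-!
Differentiating `d₁^θ` gives `cos θ D d₁ + sin θ D d₂ + (D θ) d₂^θ`. As `d₂^θ` is a unit vector,
the last term contributes `D θ`. Differentiating the orthonormality relations gives
`D d₁ · d₁ = D d₂ · d₂ = 0` and `D d₂ · d₁ = - D d₁ · d₂`, so the first two terms contribute
`(cos² θ + sin² θ) D d₁ · d₂`.
-/

section DotProduct

variable {𝕜 E ι : Type*} [NontriviallyNormedField 𝕜] [CompleteSpace 𝕜]
  [NormedAddCommGroup E] [NormedSpace 𝕜 E] [Fintype ι] {f g : E → ι → 𝕜} {x : E}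

theorem fderiv_dotProduct_apply (hf : DifferentiableAt 𝕜 f x) (hg : DifferentiableAt 𝕜 g x)
    (h : E) :
    fderiv 𝕜 (fun y => f y ⬝ᵥ g y) x h = fderiv 𝕜 f x h ⬝ᵥ g x + f x ⬝ᵥ fderiv 𝕜 g x h := by
  have key := congrArg (· h) <|
    (dotProductBilin 𝕜 𝕜).toContinuousBilinearMap.fderiv_of_bilinear hf hg
  simpa [add_comm] using key

theorem fderiv_dotProduct_add_dotProduct_fderiv_eq_zero {c : 𝕜} (hf : DifferentiableAt 𝕜 f x)
    (hg : DifferentiableAt 𝕜 g x) (hfg : ∀ y, f y ⬝ᵥ g y = c) (h : E) :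
    fderiv 𝕜 f x h ⬝ᵥ g x + f x ⬝ᵥ fderiv 𝕜 g x h = 0 := by
  rw [← fderiv_dotProduct_apply hf hg, funext hfg, fderiv_const_apply, _root_.zero_apply]

theorem fderiv_dotProduct_self_eq_zero [CharZero 𝕜] {c : 𝕜} (hf : DifferentiableAt 𝕜 f x)
    (hff : ∀ y, f y ⬝ᵥ f y = c) (h : E) : fderiv 𝕜 f x h ⬝ᵥ f x = 0 := by
  have := fderiv_dotProduct_add_dotProduct_fderiv_eq_zero hf hf hff h
  rw [dotProduct_comm (f x), ← two_mul] at this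
  exact (mul_eq_zero.1 this).resolve_left two_ne_zero

end DotProduct

open Real in
theorem fderiv_cos_smul_add_sin_smul_apply {E F : Type*} [NormedAddCommGroup E] [NormedSpace ℝ E]
    [NormedAddCommGroup F] [NormedSpace ℝ F] {θ : E → ℝ} {u v : E → F} {x : E}
    (hθ : DifferentiableAt ℝ θ x) (hu : DifferentiableAt ℝ u x) (hv : DifferentiableAt ℝ v x)
    (h : E) :
    fderiv ℝ (fun y => cos (θ y) • u y + sin (θ y) • v y) x h =
      cos (θ x) • fderiv ℝ u x h + sin (θ x) • fderiv ℝ v x h +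
        fderiv ℝ θ x h • (-sin (θ x) • u x + cos (θ x) • v x) := by
  have := (hθ.hasFDerivAt.cos.fun_smul hu.hasFDerivAt).fun_add
    (hθ.hasFDerivAt.sin.fun_smul hv.hasFDerivAt)
  rw [this.fderiv]
  simp only [_root_.add_apply, _root_.smul_apply,
    ContinuousLinearMap.smulRight_apply, smul_eq_mul, smul_add, smul_smul]
  module

theorem dotProduct_rotated_of_orthonormal {R ι : Type*} [CommRing R] [Fintype ι]
    {a b a' b' : ι → R} {c s : R} (t : R) (hcs : c ^ 2 + s ^ 2 = 1)
    (haa : a ⬝ᵥ a = 1) (hbb : b ⬝ᵥ b = 1) (hab : a ⬝ᵥ b = 0)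
    (ha' : a' ⬝ᵥ a = 0) (hb' : b' ⬝ᵥ b = 0) (hab' : a' ⬝ᵥ b + a ⬝ᵥ b' = 0) :
    (c • a' + s • b' + t • (-s • a + c • b)) ⬝ᵥ (-s • a + c • b) = a' ⬝ᵥ b + t := by
  simp only [add_dotProduct, dotProduct_add, smul_dotProduct, dotProduct_smul, neg_smul,
    neg_dotProduct, dotProduct_neg, smul_eq_mul]
  rw [dotProduct_comm b a, dotProduct_comm b' a]
  linear_combination (a' ⬝ᵥ b + t) * hcs - c * s * ha' + c * s * hb' - s ^ 2 * hab'
    + t * s ^ 2 * haa + t * c ^ 2 * hbb - 2 * t * s * c * hab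

theorem drilling_component_shift
    (d₁ d₂ : (Fin 2 → ℝ) → (Fin 3 → ℝ)) (θ : (Fin 2 → ℝ) → ℝ)
    (hd₁ : Differentiable ℝ d₁) (hd₂ : Differentiable ℝ d₂)
    (hθ : Differentiable ℝ θ)
    (h11 : ∀ x, d₁ x ⬝ᵥ d₁ x = 1)
    (h22 : ∀ x, d₂ x ⬝ᵥ d₂ x = 1)
    (h12 : ∀ x, d₁ x ⬝ᵥ d₂ x = 0) :
    ∀ (x h : Fin 2 → ℝ),
      fderiv ℝ (fun y => Real.cos (θ y) • d₁ y + Real.sin (θ y) • d₂ y) x h ⬝ᵥ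
          (-(Real.sin (θ x)) • d₁ x + Real.cos (θ x) • d₂ x)
        = fderiv ℝ d₁ x h ⬝ᵥ d₂ x + fderiv ℝ θ x h := by
  intro x h
  rw [fderiv_cos_smul_add_sin_smul_apply (hθ x) (hd₁ x) (hd₂ x)]
  exact dotProduct_rotated_of_orthonormal _ (Real.cos_sq_add_sin_sq _) (h11 x) (h22 x) (h12 x)
    (fderiv_dotProduct_self_eq_zero (hd₁ x) h11 h) (fderiv_dotProduct_self_eq_zero (hd₂ x) h22 h)
    (fderiv_dotProduct_add_dotProduct_fderiv_eq_zero (hd₁ x) (hd₂ x) h12 h)
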